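/- Let L/K be a finite Galois extension of degree n with Galois group G, let σ be a non-identity element of G, and let A^σ = {f_{b,σ} : b ∈ L}, a K-subspace of the space Alt(L) of alternating K-bilinear forms on L. If σ does not have order 2, then dim_K A^σ = n; if σ has order 2, then dim_K A^σ = n/2. -/

import Mathlib

variable {K L : Type*} [Field K] [Field L] [Algebra K L]

/-- The alternating bilinear form `f_{b,σ}(x,y) = Tr^L_K (b * (x * σ y - σ x * y))`,
where `Tr^L_K` is the trace form of the extension `L/K`. -/
noncomputable def galoisAltForm (b : L) (σ : L ≃ₐ[K] L) : (L →ₗ[K] L →ₗ[K] K) :=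
  LinearMap.mk₂ K (fun x y => Algebra.trace K L (b * (x * σ y - σ x * y)))
    (fun x x' y => by
      try dsimp only
      rw [show b * ((x + x') * σ y - σ (x + x') * y)
            = b * (x * σ y - σ x * y) + b * (x' * σ y - σ x' * y) by
          rw [map_add σ]; ring, map_add])
    (fun a x y => by
      try dsimp only
      rw [show b * ((a • x) * σ y - σ (a • x) * y)
            = a • (b * (x * σ y - σ x * y)) by
          rw [map_smul σ]
          simp only [smul_sub, smul_mul_assoc, mul_smul_comm, mul_sub], map_smul])
    (fun x y y' => by
      try dsimp only
      rw [show b * (x * σ (y + y') - σ x * (y + y'))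
            = b * (x * σ y - σ x * y) + b * (x * σ y' - σ x * y') by
          rw [map_add σ]; ring, map_add])
    (fun a x y => by
      try dsimp only
      rw [show b * (x * σ (a • y) - σ x * (a • y))
            = a • (b * (x * σ y - σ x * y)) by
          rw [map_smul σ]
          simp only [smul_sub, smul_mul_assoc, mul_smul_comm, mul_sub], map_smul])

/-- `b ↦ f_{b,σ}` as a `K`-linear map. -/
noncomputable def galoisAltFormL (σ : L ≃ₐ[K] L) : L →ₗ[K] (L →ₗ[K] L →ₗ[K] K) where
  toFun b := galoisAltForm b σ
  map_add' b b' := by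
    ext x y
    simp only [galoisAltForm, LinearMap.mk₂_apply, LinearMap.add_apply]
    rw [← map_add, add_mul]
  map_smul' a b := by
    ext x y
    simp only [galoisAltForm, LinearMap.mk₂_apply, LinearMap.smul_apply, RingHom.id_apply]
    rw [← map_smul, smul_mul_assoc]

/-- the dimension of `A^σ = {f_{b,σ} : b ∈ L}` is `n` if `σ` does not
have order 2, and `n/2` if `σ` has order 2. -/
theorem statement6 [FiniteDimensional K L] [IsGalois K L]
    (n : ℕ) (hn : Module.finrank K L = n)
    (σ : L ≃ₐ[K] L) (hσ : σ ≠ 1) :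
    (orderOf σ ≠ 2 →
        Module.finrank K (LinearMap.range (galoisAltFormL σ)) = n) ∧
    (orderOf σ = 2 →
        Module.finrank K (LinearMap.range (galoisAltFormL σ)) = n / 2) := by
  classical
  -- key characterization of the kernel
  have hker : ∀ b : L, galoisAltFormL σ b = 0 ↔ ∀ x : L, σ.symm (b * x) = b * σ x := by
    intro b
    constructor
    · intro h x
      have h2 : ∀ y : L, Algebra.trace K L ((σ.symm (b * x) - b * σ x) * y) = 0 := by
        intro y
        have := LinearMap.congr_fun (LinearMap.congr_fun h x) y
        simp only [galoisAltFormL, galoisAltForm, LinearMap.coe_mk, AddHom.coe_mk,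
          LinearMap.mk₂_apply, LinearMap.zero_apply] at this
        have htr : Algebra.trace K L (b * x * σ y) = Algebra.trace K L (σ.symm (b * x) * y) := by
          rw [← Algebra.trace_eq_of_algEquiv σ (σ.symm (b * x) * y)]
          simp [mul_comm]
        rw [sub_mul, map_sub, ← htr]
        rw [show b * (x * σ y - σ x * y) = b * x * σ y - b * σ x * y by ring] at this
        rw [map_sub] at this
        exact this
      have := (traceForm_nondegenerate K L).1 (σ.symm (b * x) - b * σ x) h2
      exact sub_eq_zero.mp this
    · intro h
      ext x y
      simp only [galoisAltFormL, galoisAltForm, LinearMap.coe_mk, AddHom.coe_mk,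
        LinearMap.mk₂_apply, LinearMap.zero_apply]
      have htr : Algebra.trace K L (b * x * σ y) = Algebra.trace K L (b * σ x * y) := by
        have he : b * x * σ y = σ (σ.symm (b * x) * y) := by
          rw [map_mul, σ.apply_symm_apply]
        rw [he, Algebra.trace_eq_of_algEquiv, h x, mul_assoc]
      rw [show b * (x * σ y - σ x * y) = b * x * σ y - b * σ x * y by ring, map_sub, htr,
        sub_self]
  have hrn := LinearMap.finrank_range_add_finrank_ker (V₂ := L →ₗ[K] L →ₗ[K] K) (galoisAltFormL σ : L →ₗ[K] _)
  constructor
  · -- σ does not have order 2 : kernel is trivial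
    intro h2
    have hsq : σ * σ ≠ 1 := by
      intro hh
      haveI : Fact (Nat.Prime 2) := ⟨Nat.prime_two⟩
      exact h2 (orderOf_eq_prime (by rw [pow_two]; exact hh) hσ)
    have hkz : LinearMap.ker (galoisAltFormL σ) = ⊥ := by
      rw [LinearMap.ker_eq_bot']
      intro b hb
      rw [hker] at hb
      have hb1 := hb 1
      rw [mul_one, map_one, mul_one] at hb1
      by_contra hbne
      apply hsq
      ext z
      have hz : σ.symm (b * σ z) = b * z := by
        rw [map_mul, hb1, σ.symm_apply_apply]
      have := hb (σ z)
      rw [hz] at this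
      have hcz := mul_left_cancel₀ hbne this
      show σ (σ z) = z
      exact hcz.symm
    rw [hkz, finrank_bot, add_zero] at hrn
    rw [hrn, hn]
  · -- σ has order 2
    intro h2
    have hsq : σ * σ = 1 := by
      have := pow_orderOf_eq_one σ
      rwa [h2, pow_two] at this
    have hsymm : ∀ x, σ.symm x = σ x := by
      intro x
      have h3 : σ (σ x) = x := by
        have := congrArg (fun f => f x) (congrArg DFunLike.coe hsq)
        simpa using this
      have h4 := congrArg σ.symm h3
      rw [σ.symm_apply_apply] at h4
      exact h4.symm
    -- kernel = fixed field of ⟨σ⟩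
    set H : Subgroup (L ≃ₐ[K] L) := Subgroup.zpowers σ with hH
    set F : IntermediateField K L := IntermediateField.fixedField H with hF
    have hker2 : (LinearMap.ker (galoisAltFormL σ) : Set L) = (F : Set L) := by
      ext b
      simp only [SetLike.mem_coe, LinearMap.mem_ker, hker]
      constructor
      · intro hb
        have hb1 := hb 1
        rw [mul_one, map_one, mul_one, hsymm] at hb1
        intro g
        obtain ⟨g, hg⟩ := g
        obtain ⟨k, rfl⟩ := hg
        show (σ ^ k) • b = b
        have hfix : ∀ m : ℕ, (σ ^ m) b = b := by
          intro m
          induction m with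
          | zero => simp
          | succ p ih =>
            rw [pow_succ']
            show σ ((σ ^ p) b) = b
            rw [ih, hb1]
        have hfix' : ∀ m : ℤ, (σ ^ m) b = b := by
          intro m
          induction m using Int.induction_on with
          | zero => simp
          | succ p ih =>
            rw [show ((p : ℤ) + 1) = (p + 1 : ℕ) by push_cast; ring, zpow_natCast]
            exact hfix (p + 1)
          | pred p ih =>
            have : σ ^ (-(p : ℤ) - 1) = σ ^ (-(p : ℤ)) * σ.symm := by
              rw [show (-(p : ℤ) - 1) = -(p : ℤ) + (-1) by ring, zpow_add, zpow_neg_one]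
              rfl
            rw [this]
            show (σ ^ (-(p : ℤ))) (σ.symm b) = b
            rw [hsymm, hb1]
            rw [show (-(p : ℤ)) = -(p : ℕ) by simp, zpow_neg, zpow_natCast] at ih ⊢
            exact ih
        exact hfix' k
      · intro hb
        have hb1 : σ b = b := hb ⟨σ, Subgroup.mem_zpowers σ⟩
        intro x
        rw [map_mul, hsymm, hsymm, hb1]
    have hkerF : LinearMap.ker (galoisAltFormL σ) = Subalgebra.toSubmodule F.toSubalgebra := by
      apply SetLike.coe_injective
      exact hker2
    have hcard : Fintype.card H = 2 := by
      show Fintype.card (Subgroup.zpowers σ) = 2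
      rw [← Nat.card_eq_fintype_card, Nat.card_zpowers, h2]
    have hFL : Module.finrank F L = 2 := by
      rw [hF, IntermediateField.finrank_fixedField_eq_card, Nat.card_eq_fintype_card, hcard]
    have htower : Module.finrank K F * Module.finrank F L = n := by
      rw [Module.finrank_mul_finrank, hn]
    rw [hFL] at htower
    have hkf : Module.finrank K (LinearMap.ker (galoisAltFormL σ)) = n / 2 := by
      rw [hkerF]
      show Module.finrank K F = n / 2
      omega
    rw [hkf] at hrn
    omega
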